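/- arXiv:2111.14476 — 2 statements merged into one kernel-verified Lean document; each statement's English description precedes it below -/
import Mathlib

section
/- There do not exist five distinct points p₁, p₂, p₃, p₄, p₅ of ℂ × ℝ whose pairwise Korányi distances are all equal to 1. -/
/-!
Lift a point `(z, t)` of the Heisenberg group to the vector `(1 + a, 1 - a, 2z)`, `a = |z|² - it`,
and the point at infinity to `(1, -1, 0)`. These are null vectors of the Hermitian form
`⟪v, w⟫ = v₀ w̄₀ - v₁ w̄₁ - v₂ w̄₂` of signature `(1, 2)`, and `|⟪v_p, v_q⟫|² = 4 d(p, q)⁴`,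
`|⟪v_p, v_∞⟫|² = 4`. Five equilateral points would thus give six null vectors `v_i` with all
`|⟪v_i, v_j⟫|² = 4`.

For real weights `c`, `∑ c_i c_j |⟪v_i, v_j⟫|² = ∑ ε_a ε_b |S_ab|²` with `S = ∑ c_i v_i v_iᴴ`.
Five real linear conditions (`∑ c_i = 0`, `S₀₁ = S₀₂ = 0`) leave a nonzero `c` among six weights;
for it the right side is a sum of nonnegative terms while the left side is `-4 ∑ c_i²`.
In signature `(1, n)` the same argument allows at most `2n + 1` such vectors.
-/

open Complex Real

/-- The Korányi (Heisenberg) distance on ℂ × ℝ. -/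
noncomputable def kd (p q : ℂ × ℝ) : ℝ :=
  (‖p.1 - q.1‖ ^ 4 +
    (p.2 - q.2 + 2 * (p.1 * (starRingEnd ℂ) q.1).im) ^ 2) ^ ((1 : ℝ) / 4)

open scoped ComplexConjugate

section HermitianForm

variable {ι κ : Type*} [Fintype κ]

noncomputable def diagHermForm [Fintype ι] (ε : ι → ℝ) (v w : ι → ℂ) : ℂ :=
  ∑ a, ε a * v a * conj (w a)

noncomputable def weightedOuter (c : κ → ℝ) (v : κ → ι → ℂ) (a b : ι) : ℂ :=
  ∑ i, c i * v i a * conj (v i b)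

theorem weightedOuter_swap (c : κ → ℝ) (v : κ → ι → ℂ) (a b : ι) :
    weightedOuter c v b a = conj (weightedOuter c v a b) := by
  simp only [weightedOuter, map_sum, map_mul, conj_ofReal, conj_conj]
  exact Finset.sum_congr rfl fun i _ => by ring

theorem sum_mul_normSq_diagHermForm [Fintype ι] (ε : ι → ℝ) (c : κ → ℝ) (v : κ → ι → ℂ) :
    ∑ i, ∑ j, c i * c j * normSq (diagHermForm ε (v i) (v j)) =
      ∑ a, ∑ b, ε a * ε b * normSq (weightedOuter c v a b) := by
  apply ofReal_injective
  simp only [ofReal_sum, ofReal_mul, ← mul_conj, diagHermForm, weightedOuter, map_sum, map_mul,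
    conj_ofReal, conj_conj, Finset.mul_sum, Finset.sum_mul]
  simp_rw [Finset.sum_comm (γ := κ) (α := ι)]
  refine Fintype.sum_congr _ _ fun a => Fintype.sum_congr _ _ fun b => ?_
  refine Fintype.sum_congr _ _ fun i => Fintype.sum_congr _ _ fun j => ?_
  ring

theorem sum_mul_normSq_diagHermForm_of_equilateral [Fintype ι] {ε : ι → ℝ}
    {v : κ → ι → ℂ} {k : ℝ} (hnull : ∀ i, diagHermForm ε (v i) (v i) = 0)
    (hequi : Pairwise fun i j => normSq (diagHermForm ε (v i) (v j)) = k) (c : κ → ℝ) :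
    ∑ i, ∑ j, c i * c j * normSq (diagHermForm ε (v i) (v j)) =
      k * ((∑ i, c i) ^ 2 - ∑ i, c i ^ 2) := by
  classical
  have hnormSq : ∀ i j, normSq (diagHermForm ε (v i) (v j)) = if i = j then 0 else k := by
    intro i j
    split_ifs with hij
    · rw [hij, hnull, map_zero]
    · exact hequi hij
  calc ∑ i, ∑ j, c i * c j * normSq (diagHermForm ε (v i) (v j))
      = ∑ i, ∑ j, (k * (c i * c j) - if i = j then k * c i ^ 2 else 0) := by
        refine Fintype.sum_congr _ _ fun i => Fintype.sum_congr _ _ fun j => ?_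
        rw [hnormSq]
        split_ifs with hij
        · rw [hij]; ring
        · ring
    _ = k * ((∑ i, c i) ^ 2 - ∑ i, c i ^ 2) := by
        simp only [Finset.sum_sub_distrib, Finset.sum_ite_eq, Finset.mem_univ, if_true,
          ← Finset.mul_sum, sq, Finset.sum_mul_sum]
        ring

end HermitianForm

section Minkowski

variable {κ : Type*} [Fintype κ] {n : ℕ}

def minkowskiSign (n : ℕ) (a : Fin (n + 1)) : ℝ := if a = 0 then 1 else -1

theorem minkowskiSign_mul_mul_normSq_weightedOuter_nonneg {c : κ → ℝ} {v : κ → Fin (n + 1) → ℂ}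
    (hrow : ∀ a : Fin n, weightedOuter c v 0 a.succ = 0) (a b : Fin (n + 1)) :
    0 ≤ minkowskiSign n a * minkowskiSign n b * normSq (weightedOuter c v a b) := by
  cases a using Fin.cases with
  | zero => cases b using Fin.cases with
    | zero => simp [minkowskiSign, normSq_nonneg]
    | succ b => simp [hrow]
  | succ a => cases b using Fin.cases with
    | zero => simp [weightedOuter_swap c v 0, hrow]
    | succ b => simp [minkowskiSign, normSq_nonneg]

noncomputable def sumAndRowZero (v : κ → Fin (n + 1) → ℂ) : (κ → ℝ) →ₗ[ℝ] ℝ × (Fin n → ℂ) where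
  toFun c := (∑ i, c i, fun a => weightedOuter c v 0 a.succ)
  map_add' c d := by
    simp only [Pi.add_apply, weightedOuter, ofReal_add, add_mul, Finset.sum_add_distrib]
    rfl
  map_smul' r c := by
    simp only [Pi.smul_apply, smul_eq_mul, weightedOuter, ofReal_mul, mul_assoc, ← Finset.mul_sum]
    rfl

theorem exists_ne_zero_sum_eq_zero_weightedOuter_eq_zero (v : κ → Fin (n + 1) → ℂ)
    (hcard : 2 * n + 1 < Fintype.card κ) :
    ∃ c ≠ 0, ∑ i, c i = 0 ∧ ∀ a : Fin n, weightedOuter c v 0 a.succ = 0 := by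
  have hker : LinearMap.ker (sumAndRowZero v) ≠ ⊥ := by
    refine LinearMap.ker_ne_bot_of_finrank_lt ?_
    simp only [Module.finrank_prod, Module.finrank_pi, Module.finrank_pi_fintype,
      Complex.finrank_real_complex, Module.finrank_self, Finset.sum_const, Finset.card_univ,
      Fintype.card_fin, smul_eq_mul]
    omega
  obtain ⟨c, hc, hc0⟩ := Submodule.ne_bot_iff _ |>.mp hker
  simp only [LinearMap.mem_ker, sumAndRowZero, LinearMap.coe_mk, AddHom.coe_mk, Prod.mk_eq_zero,
    funext_iff, Pi.zero_apply] at hc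
  exact ⟨c, hc0, hc⟩

theorem card_le_of_null_equilateral (v : κ → Fin (n + 1) → ℂ) {k : ℝ} (hk : 0 < k)
    (hnull : ∀ i, diagHermForm (minkowskiSign n) (v i) (v i) = 0)
    (hequi : Pairwise fun i j => normSq (diagHermForm (minkowskiSign n) (v i) (v j)) = k) :
    Fintype.card κ ≤ 2 * n + 1 := by
  by_contra! hcard
  obtain ⟨c, hc, hsum, hrow⟩ := exists_ne_zero_sum_eq_zero_weightedOuter_eq_zero v hcard
  have hgram := sum_mul_normSq_diagHermForm (minkowskiSign n) c v
  rw [sum_mul_normSq_diagHermForm_of_equilateral hnull hequi, hsum] at hgram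
  have hnonneg : 0 ≤ ∑ a, ∑ b, minkowskiSign n a * minkowskiSign n b *
      normSq (weightedOuter c v a b) := Finset.sum_nonneg fun a _ => Finset.sum_nonneg fun b _ =>
    minkowskiSign_mul_mul_normSq_weightedOuter_nonneg hrow a b
  have hsq : ∑ i, c i ^ 2 ≤ 0 := by nlinarith
  refine hc (funext fun i => pow_eq_zero_iff two_ne_zero |>.mp ?_)
  exact (Finset.sum_eq_zero_iff_of_nonneg fun j _ => sq_nonneg (c j)).mp
    (le_antisymm hsq (Finset.sum_nonneg fun j _ => sq_nonneg _)) i (Finset.mem_univ i)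

end Minkowski

section Heisenberg

theorem kd_comm (p q : ℂ × ℝ) : kd p q = kd q p := by
  have him : (q.1 * conj p.1).im = -(p.1 * conj q.1).im := by
    simp only [mul_im, conj_re, conj_im]
    ring
  rw [kd, kd, norm_sub_rev, him]
  ring_nf

theorem kd_pow_four (p q : ℂ × ℝ) :
    kd p q ^ 4 = ‖p.1 - q.1‖ ^ 4 + (p.2 - q.2 + 2 * (p.1 * conj q.1).im) ^ 2 := by
  rw [kd, ← Real.rpow_natCast, ← Real.rpow_mul (by positivity)]
  norm_num

noncomputable def standardLift (p : ℂ × ℝ) : Fin 3 → ℂ :=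
  ![1 + (normSq p.1 - p.2 * I), 1 - (normSq p.1 - p.2 * I), 2 * p.1]

def liftInfty : Fin 3 → ℂ := ![1, -1, 0]

theorem diagHermForm_minkowskiSign_two (v w : Fin 3 → ℂ) :
    diagHermForm (minkowskiSign 2) v w =
      v 0 * conj (w 0) - v 1 * conj (w 1) - v 2 * conj (w 2) := by
  simp only [diagHermForm, minkowskiSign, Nat.reduceAdd, Fin.sum_univ_three, Fin.isValue,
    Fin.reduceEq, ↓reduceIte, ofReal_one, ofReal_neg]
  ring

theorem diagHermForm_standardLift (p q : ℂ × ℝ) :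
    diagHermForm (minkowskiSign 2) (standardLift p) (standardLift q) =
      2 * (normSq (p.1 - q.1) - ((p.2 - q.2 + 2 * (p.1 * conj q.1).im : ℝ) : ℂ) * I) := by
  rw [diagHermForm_minkowskiSign_two]
  apply Complex.ext <;>
    simp only [standardLift, Matrix.cons_val_zero, Matrix.cons_val_one, Matrix.cons_val,
      normSq_apply, map_add, map_sub, map_mul, map_one, map_ofNat, conj_ofReal, conj_I, add_re,
      add_im, sub_re, sub_im, mul_re, mul_im, conj_re, conj_im, ofReal_re, ofReal_im, I_re, I_im,
      one_re, one_im, re_ofNat, im_ofNat, neg_re, neg_im] <;>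
    ring

theorem diagHermForm_standardLift_self (p : ℂ × ℝ) :
    diagHermForm (minkowskiSign 2) (standardLift p) (standardLift p) = 0 := by
  simp [diagHermForm_standardLift, mul_im, mul_comm]

theorem normSq_diagHermForm_standardLift (p q : ℂ × ℝ) :
    normSq (diagHermForm (minkowskiSign 2) (standardLift p) (standardLift q)) = 4 * kd p q ^ 4 := by
  have hnorm : ‖p.1 - q.1‖ ^ 4 = normSq (p.1 - q.1) ^ 2 := by rw [← Complex.sq_norm]; ring
  rw [diagHermForm_standardLift, kd_pow_four, hnorm]
  generalize normSq (p.1 - q.1) = x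
  generalize p.2 - q.2 + 2 * (p.1 * conj q.1).im = y
  simp only [normSq_apply, mul_re, mul_im, sub_re, sub_im, ofReal_re, ofReal_im, I_re, I_im,
    re_ofNat, im_ofNat]
  ring

theorem diagHermForm_standardLift_liftInfty (p : ℂ × ℝ) :
    diagHermForm (minkowskiSign 2) (standardLift p) liftInfty = 2 := by
  simp only [diagHermForm_minkowskiSign_two, standardLift, liftInfty, Matrix.cons_val_zero,
    Matrix.cons_val_one, Matrix.cons_val, map_one, map_neg, map_zero]
  ring

theorem diagHermForm_liftInfty_standardLift (p : ℂ × ℝ) :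
    diagHermForm (minkowskiSign 2) liftInfty (standardLift p) = 2 := by
  simp only [diagHermForm_minkowskiSign_two, standardLift, liftInfty, Matrix.cons_val_zero,
    Matrix.cons_val_one, Matrix.cons_val, map_add, map_sub, map_mul, map_one, conj_ofReal, conj_I]
  ring

theorem diagHermForm_liftInfty_self : diagHermForm (minkowskiSign 2) liftInfty liftInfty = 0 := by
  simp [diagHermForm_minkowskiSign_two, liftInfty]

theorem card_le_four_of_pairwise_kd_eq_one {κ : Type*} [Fintype κ] (p : κ → ℂ × ℝ)
    (h : Pairwise fun i j => kd (p i) (p j) = 1) : Fintype.card κ ≤ 4 := by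
  have := card_le_of_null_equilateral (fun o : Option κ => o.elim liftInfty (standardLift ∘ p))
    (k := 4) (by norm_num) ?_ ?_
  · simpa [Nat.lt_succ_iff] using this
  · rintro (_ | i)
    · exact diagHermForm_liftInfty_self
    · exact diagHermForm_standardLift_self (p i)
  · rintro (_ | i) (_ | j) hij
    · exact absurd rfl hij
    · norm_num [diagHermForm_liftInfty_standardLift]
    · norm_num [diagHermForm_standardLift_liftInfty]
    · simp [normSq_diagHermForm_standardLift, h (Option.some_injective _ |>.ne_iff.mp hij)]

end Heisenberg

theorem no_five_equilateral_points :
    ¬ ∃ p₁ p₂ p₃ p₄ p₅ : ℂ × ℝ,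
      p₁ ≠ p₂ ∧ p₁ ≠ p₃ ∧ p₁ ≠ p₄ ∧ p₁ ≠ p₅ ∧ p₂ ≠ p₃ ∧ p₂ ≠ p₄ ∧ p₂ ≠ p₅ ∧
      p₃ ≠ p₄ ∧ p₃ ≠ p₅ ∧ p₄ ≠ p₅ ∧
      kd p₁ p₂ = 1 ∧ kd p₁ p₃ = 1 ∧ kd p₁ p₄ = 1 ∧ kd p₁ p₅ = 1 ∧
      kd p₂ p₃ = 1 ∧ kd p₂ p₄ = 1 ∧ kd p₂ p₅ = 1 ∧
      kd p₃ p₄ = 1 ∧ kd p₃ p₅ = 1 ∧ kd p₄ p₅ = 1 := by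
  rintro ⟨p₁, p₂, p₃, p₄, p₅, -, -, -, -, -, -, -, -, -, -,
    h₁₂, h₁₃, h₁₄, h₁₅, h₂₃, h₂₄, h₂₅, h₃₄, h₃₅, h₄₅⟩
  have hpair : Pairwise fun i j => kd (![p₁, p₂, p₃, p₄, p₅] i) (![p₁, p₂, p₃, p₄, p₅] j) = 1 := by
    intro i j hij
    fin_cases i <;> fin_cases j <;> simp_all [kd_comm]
  simpa using card_le_four_of_pairwise_kd_eq_one _ hpair
end

section
/- A point (z, t) ∈ ℂ × ℝ is at Korányi distance 1 from both (0, −1/2) and (0, 1/2) if and only if t = 0 and |z| = (3/4)^(1/4). -/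
open Complex Real

lemma rpow_one_div_four_eq_iff {x y : ℝ} (hx : 0 ≤ x) (hy : 0 ≤ y) :
    x ^ ((1 : ℝ) / 4) = y ↔ x = y ^ 4 := by
  rw [one_div, Real.rpow_inv_eq hx hy four_ne_zero]
  norm_cast

lemma kd_eq_one_iff (p q : ℂ × ℝ) :
    kd p q = 1 ↔
      ‖p.1 - q.1‖ ^ 4 + (p.2 - q.2 + 2 * (p.1 * (starRingEnd ℂ) q.1).im) ^ 2 = 1 := by
  rw [kd, rpow_one_div_four_eq_iff (by positivity) zero_le_one, one_pow]

lemma kd_vertical_eq_one_iff (z : ℂ) (t s : ℝ) :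
    kd (z, t) (0, s) = 1 ↔ ‖z‖ ^ 4 + (t - s) ^ 2 = 1 := by
  simp [kd_eq_one_iff]

lemma add_sq_eq_and_add_sq_eq_iff {a c t s : ℝ} (hs : s ≠ 0) :
    (a + (t + s) ^ 2 = c ∧ a + (t - s) ^ 2 = c) ↔ t = 0 ∧ a + s ^ 2 = c := by
  constructor
  · rintro ⟨hplus, hminus⟩
    have ht : t = 0 := by
      have : 4 * s * t = 0 := by linear_combination hplus - hminus
      simpa [hs] using this
    subst ht
    exact ⟨rfl, by simpa using hminus⟩
  · rintro ⟨rfl, h⟩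
    constructor <;> simpa using h

theorem equidistant_from_vertical_pair (z : ℂ) (t : ℝ) :
    (kd (z, t) ((0 : ℂ), (-1 / 2 : ℝ)) = 1 ∧ kd (z, t) ((0 : ℂ), (1 / 2 : ℝ)) = 1) ↔
      t = 0 ∧ ‖z‖ = (3 / 4 : ℝ) ^ ((1 : ℝ) / 4) := by
  rw [kd_vertical_eq_one_iff, kd_vertical_eq_one_iff, neg_div, sub_neg_eq_add,
    add_sq_eq_and_add_sq_eq_iff (by norm_num), eq_comm (a := ‖z‖),
    rpow_one_div_four_eq_iff (by norm_num) (norm_nonneg z)]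
  exact and_congr_right fun _ => by rw [← eq_sub_iff_add_eq, eq_comm]; norm_num
end
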